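/- Unwrapping inverts wrapping: for every term u of the source calculus λ_sou, ⌊⌈u⌉⌋ = u, where ⌈·⌉ is the wrapping translation λ_sou → λ_int and ⌊·⌋ is the unwrapping translation λ_int → λ_sou. -/

import Mathlib

set_option linter.unusedVariables false

namespace CC

/-- Terms of the source calculus λ_sou (de Bruijn indices, multi-binders). -/
inductive STm : Type
| var : Nat → STm
| lam : Nat → STm → STm
| app : STm → STm → STm
| proj : Nat → STm → STm
| tup : List STm → STm

instance : Inhabited STm := ⟨.var 0⟩

namespace STm

/-- Size of a source term. -/
def size : STm → Nat
| var _ => 1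
| lam n t => t.size + n + 1
| app t u => t.size + u.size + 1
| proj _ t => t.size + 1
| tup ts => ts.length + (ts.attach.map (fun ⟨a, ha⟩ => a.size)).sum
decreasing_by all_goals first
  | (have := List.sizeOf_lt_of_mem ha; omega)
  | decreasing_tactic

/-- Renaming of free de Bruijn indices. -/
def rename (ρ : Nat → Nat) : STm → STm
| var i => var (ρ i)
| lam n t => lam n (t.rename (fun i => if i < n then i else ρ (i - n) + n))
| app t u => app (t.rename ρ) (u.rename ρ)
| proj i t => proj i (t.rename ρ)
| tup ts => tup (ts.attach.map (fun ⟨a, ha⟩ => a.rename ρ))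
decreasing_by all_goals first
  | (have := List.sizeOf_lt_of_mem ha; omega)
  | decreasing_tactic

/-- Parallel substitution. -/
def subst (σ : Nat → STm) : STm → STm
| var i => σ i
| lam n t => lam n (t.subst (fun i => if i < n then var i else (σ (i - n)).rename (· + n)))
| app t u => app (t.subst σ) (u.subst σ)
| proj i t => proj i (t.subst σ)
| tup ts => tup (ts.attach.map (fun ⟨a, ha⟩ => a.subst σ))
decreasing_by all_goals first
  | (have := List.sizeOf_lt_of_mem ha; omega)
  | decreasing_tactic

/-- Simultaneous substitution of a list of terms for indices `0..vs.length-1`. -/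
def substList (vs : List STm) (t : STm) : STm :=
  t.subst (fun i => if i < vs.length then vs.getD i default else var (i - vs.length))

end STm

/-- Values of λ_sou: (multi-variable) abstractions and tuples of values. -/
inductive SVal : STm → Prop
| lam {n t} : SVal (.lam n t)
| tup {vs} : (∀ v ∈ vs, SVal v) → SVal (.tup vs)

/-- All free de Bruijn indices of `t` are `< k`. `FB 0 t` means `t` is closed. -/
inductive SFB : Nat → STm → Prop
| var {k i} : i < k → SFB k (.var i)
| lam {k n t} : SFB (k + n) t → SFB k (.lam n t)
| app {k t u} : SFB k t → SFB k u → SFB k (.app t u)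
| proj {k i t} : SFB k t → SFB k (.proj i t)
| tup {k ts} : (∀ t ∈ ts, SFB k t) → SFB k (.tup ts)

/-- Labels for the two rewrite rules. -/
inductive Lab | beta | pi
deriving DecidableEq

/-- Labelled weak right-to-left call-by-value reduction of λ_sou,
root rules closed under evaluation contexts. -/
inductive SStepL : Lab → STm → STm → Prop
| beta {n t vs} : (∀ v ∈ vs, SVal v) → vs.length = n →
    SStepL .beta (.app (.lam n t) (.tup vs)) (STm.substList vs t)
| proj {i vs} : (∀ v ∈ vs, SVal v) → i < vs.length →
    SStepL .pi (.proj i (.tup vs)) (vs.getD i default)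
| appR {l t u u'} : SStepL l u u' → SStepL l (.app t u) (.app t u')
| appL {l v t t'} : SVal v → SStepL l t t' → SStepL l (.app t v) (.app t' v)
| projC {l i t t'} : SStepL l t t' → SStepL l (.proj i t) (.proj i t')
| tupC {l ts t t' vs} : (∀ v ∈ vs, SVal v) → SStepL l t t' →
    SStepL l (.tup (ts ++ t :: vs)) (.tup (ts ++ t' :: vs))

/-- The reduction →_sou. -/
def SStep (t u : STm) : Prop := ∃ l, SStepL l t u

/-- Clashes of λ_sou: root clashes closed under evaluation contexts. -/
inductive SClash : STm → Prop
| rproj {i v} : SVal v → (∀ vs, v = .tup vs → vs.length ≤ i) → SClash (.proj i v)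
| rapp {n t v} : SVal v → (∀ vs, v = .tup vs → vs.length ≠ n) → SClash (.app (.lam n t) v)
| rtup {rs s} : SClash (.app (.tup rs) s)
| cAppR {t u} : SClash u → SClash (.app t u)
| cAppL {t v} : SVal v → SClash t → SClash (.app t v)
| cProj {i t} : SClash t → SClash (.proj i t)
| cTup {ts t vs} : (∀ v ∈ vs, SVal v) → SClash t → SClash (.tup (ts ++ t :: vs))

/-- Clash-freeness (coinductively: no reduct is a clash). -/
def SClashFree (t : STm) : Prop := ∀ u, Relation.ReflTransGen SStep t u → ¬ SClash u

/-- `k`-fold iteration of a reduction. -/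
def iterRel {α : Type _} (R : α → α → Prop) : Nat → α → α → Prop
| 0, t, u => t = u
| (k+1), t, u => ∃ s, R t s ∧ iterRel R k s u

end CC

namespace CC

/-- Terms of the intermediate calculus λ_int: abstractions are replaced by
closures `clo n m body bag` binding `n` wrapped variables ȳ (indices `m..m+n-1`
of the body) and `m` source variables x̄ (indices `0..m-1` of the body),
with a bag of `n` terms. -/
inductive ITm : Type
| var : Nat → ITm
| app : ITm → ITm → ITm
| proj : Nat → ITm → ITm
| tup : List ITm → ITm
| clo : Nat → Nat → ITm → List ITm → ITm

instance : Inhabited ITm := ⟨.var 0⟩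

namespace ITm

/-- Renaming of free variables of a λ_int term: closure bodies are untouched
(there are no free variables in the body other than the closure's own binders). -/
def irename (ρ : Nat → Nat) : ITm → ITm
| var i => var (ρ i)
| app t u => app (t.irename ρ) (u.irename ρ)
| proj i t => proj i (t.irename ρ)
| tup ts => tup (ts.attach.map (fun ⟨a, ha⟩ => a.irename ρ))
| clo n m body bag => clo n m body (bag.attach.map (fun ⟨a, ha⟩ => a.irename ρ))
decreasing_by all_goals first
  | (have := List.sizeOf_lt_of_mem ha; omega)
  | decreasing_tactic

/-- Simultaneous substitution of the terms `vs` for the free variables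
`0..vs.length-1` of a λ_int term (shifting the remaining ones down);
it goes into bags but leaves closure bodies untouched. -/
def isubst (vs : List ITm) : ITm → ITm
| var i => if i < vs.length then vs.getD i default else var (i - vs.length)
| app t u => app (t.isubst vs) (u.isubst vs)
| proj i t => proj i (t.isubst vs)
| tup ts => tup (ts.attach.map (fun ⟨a, ha⟩ => a.isubst vs))
| clo n m body bag => clo n m body (bag.attach.map (fun ⟨a, ha⟩ => a.isubst vs))
decreasing_by all_goals first
  | (have := List.sizeOf_lt_of_mem ha; omega)
  | decreasing_tactic

/-- Size of a λ_int term (counting bags and binder sequences). -/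
def isize : ITm → Nat
| var _ => 1
| app t u => t.isize + u.isize + 1
| proj _ t => t.isize + 1
| tup ts => ts.length + (ts.attach.map (fun ⟨a, ha⟩ => a.isize)).sum
| clo n m body bag =>
    body.isize + n + m + 1 + bag.length + (bag.attach.map (fun ⟨a, ha⟩ => a.isize)).sum
decreasing_by all_goals first
  | (have := List.sizeOf_lt_of_mem ha; omega)
  | decreasing_tactic

end ITm

/-- Values of λ_int: closures (with a variable bag or with an evaluated bag)
and tuples of values. -/
inductive IVal : ITm → Prop
| cloV {n m t bag} : (∀ b ∈ bag, ∃ i, b = ITm.var i) → IVal (.clo n m t bag)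
| cloE {n m t bag} : (∀ b ∈ bag, IVal b) → IVal (.clo n m t bag)
| tup {vs} : (∀ v ∈ vs, IVal v) → IVal (.tup vs)

/-- All free variables of a λ_int term are `< k` (`IFB 0 t`: `t` is closed). -/
inductive IFB : Nat → ITm → Prop
| var {k i} : i < k → IFB k (.var i)
| app {k t u} : IFB k t → IFB k u → IFB k (.app t u)
| proj {k i t} : IFB k t → IFB k (.proj i t)
| tup {k ts} : (∀ t ∈ ts, IFB k t) → IFB k (.tup ts)
| clo {k n m body bag} : (∀ b ∈ bag, IFB k b) → IFB (n + m + k) body →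
    IFB k (.clo n m body bag)

/-- Well-formed λ_int terms: every closure `clo n m body bag` satisfies
`|bag| = n`, its body is closed by the binders (fv(body) ⊆ ȳ ∪ x̄), and the bag
is either a bag of variables or a bag of values. -/
inductive IWF : ITm → Prop
| var {i} : IWF (.var i)
| app {t u} : IWF t → IWF u → IWF (.app t u)
| proj {i t} : IWF t → IWF (.proj i t)
| tup {ts} : (∀ t ∈ ts, IWF t) → IWF (.tup ts)
| cloV {n m body bag} : bag.length = n → IFB (n + m) body →
    (∀ b ∈ bag, ∃ i, b = ITm.var i) → IWF body → IWF (.clo n m body bag)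
| cloE {n m body bag} : bag.length = n → IFB (n + m) body →
    (∀ b ∈ bag, IVal b) → (∀ b ∈ bag, IWF b) → IWF body → IWF (.clo n m body bag)

/-- Prime λ_int terms: all closures are variable closures. -/
inductive IPrime : ITm → Prop
| var {i} : IPrime (.var i)
| app {t u} : IPrime t → IPrime u → IPrime (.app t u)
| proj {i t} : IPrime t → IPrime (.proj i t)
| tup {ts} : (∀ t ∈ ts, IPrime t) → IPrime (.tup ts)
| clo {n m body bag} : (∀ b ∈ bag, ∃ i, b = ITm.var i) → IPrime body →
    IPrime (.clo n m body bag)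

/-- Labelled reduction of λ_int: the root rules `iβv` (the closure's bag is
substituted for ȳ and the argument tuple for x̄, simultaneously) and `iπ`,
closed under evaluation contexts (which do not enter closures). -/
inductive IStepL : Lab → ITm → ITm → Prop
| beta {n m body bag vs} : (∀ b ∈ bag, IVal b) → (∀ v ∈ vs, IVal v) →
    bag.length = n → vs.length = m →
    IStepL .beta (.app (.clo n m body bag) (.tup vs)) (ITm.isubst (vs ++ bag) body)
| proj {i vs} : (∀ v ∈ vs, IVal v) → i < vs.length →
    IStepL .pi (.proj i (.tup vs)) (vs.getD i default)
| appR {l t u u'} : IStepL l u u' → IStepL l (.app t u) (.app t u')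
| appL {l v t t'} : IVal v → IStepL l t t' → IStepL l (.app t v) (.app t' v)
| projC {l i t t'} : IStepL l t t' → IStepL l (.proj i t) (.proj i t')
| tupC {l ts t t' vs} : (∀ v ∈ vs, IVal v) → IStepL l t t' →
    IStepL l (.tup (ts ++ t :: vs)) (.tup (ts ++ t' :: vs))

/-- The reduction →_int. -/
def IStep (t u : ITm) : Prop := ∃ l, IStepL l t u

/-- Clashes of λ_int: root clashes closed under evaluation contexts. -/
inductive IClash : ITm → Prop
| rproj {i v} : IVal v → (∀ vs, v = .tup vs → vs.length ≤ i) → IClash (.proj i v)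
| rapp {n m body bag v} : IVal v → (∀ vs, v = .tup vs → vs.length ≠ m) →
    IClash (.app (.clo n m body bag) v)
| rtup {rs s} : IClash (.app (.tup rs) s)
| cAppR {t u} : IClash u → IClash (.app t u)
| cAppL {t v} : IVal v → IClash t → IClash (.app t v)
| cProj {i t} : IClash t → IClash (.proj i t)
| cTup {ts t vs} : (∀ v ∈ vs, IVal v) → IClash t → IClash (.tup (ts ++ t :: vs))

/-- Clash-freeness for λ_int. -/
def IClashFree (t : ITm) : Prop := ∀ u, Relation.ReflTransGen IStep t u → ¬ IClash u

/-- The wrapping translation ⌈·⌉ : λ_sou → λ_int: every abstraction `λx̄.t` with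
free variables ȳ becomes the variable closure `[λȳ.λx̄.⌈t⌉, ⟨ȳ⟩]`; homomorphic
on the other constructors. -/
def STm.fvs : STm → Finset Nat
| .var i => {i}
| .lam n t => (t.fvs.filter (· ≥ n)).image (· - n)
| .app t u => t.fvs ∪ u.fvs
| .proj _ t => t.fvs
| .tup ts => ts.attach.foldr (fun ⟨a, ha⟩ acc => a.fvs ∪ acc) ∅
decreasing_by all_goals first
  | (have := List.sizeOf_lt_of_mem ha; omega)
  | decreasing_tactic

def STm.wrap : STm → ITm
| .var i => .var i
| .app t u => .app t.wrap u.wrap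
| .proj i t => .proj i t.wrap
| .tup ts => .tup (ts.attach.map (fun ⟨a, ha⟩ => a.wrap))
| .lam n t =>
    let ys : List Nat := (((t.fvs.filter (· ≥ n)).image (· - n)).sort (· ≤ ·))
    .clo ys.length n
      (t.wrap.irename (fun j => if j < n then j else n + (ys.idxOf (j - n))))
      (ys.map (fun j => ITm.var j))
decreasing_by all_goals first
  | (have := List.sizeOf_lt_of_mem ha; omega)
  | decreasing_tactic

/-- The unwrapping translation ⌊·⌋ : λ_int → λ_sou: substitutes the (unwrapped)
bag of each closure for its wrapped variables ȳ; on a variable closure with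
bag ⟨ȳ⟩ this gives `λx̄.⌊body⌋` with the ȳ free. -/
def ITm.unwrap : ITm → STm
| .var i => .var i
| .app t u => .app t.unwrap u.unwrap
| .proj i t => .proj i t.unwrap
| .tup ts => .tup (ts.attach.map (fun ⟨a, ha⟩ => a.unwrap))
| .clo n m body bag =>
    let ub : List STm := bag.attach.map (fun ⟨a, ha⟩ => a.unwrap)
    .lam m (body.unwrap.subst (fun i =>
      if i < m then .var i
      else if i < m + n then (ub.getD (i - m) default).rename (· + m)
      else .var (i - n)))
decreasing_by all_goals first
  | (have := List.sizeOf_lt_of_mem ha; omega)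
  | decreasing_tactic

end CC


namespace CC

lemma attach_map_eq {α β} (ts : List α) (f : α → β) :
    ts.attach.map (fun x => f x.1) = ts.map f := List.attach_map_val

lemma STm.rename_subst (ρ : Nat → Nat) (σ : Nat → STm) :
    (t : STm) → (t.rename ρ).subst σ = t.subst (fun i => σ (ρ i))
  | .var i => by simp [STm.rename, STm.subst]
  | .lam n t => by
      simp only [STm.rename, STm.subst, STm.lam.injEq, true_and]
      rw [STm.rename_subst]
      congr 1
      funext i
      by_cases h : i < n <;> simp [h]
  | .app t u => by
      simp [STm.rename, STm.subst, STm.rename_subst ρ σ t, STm.rename_subst ρ σ u]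
  | .proj j t => by simp [STm.rename, STm.subst, STm.rename_subst ρ σ t]
  | .tup ts => by
      simp only [STm.rename, STm.subst, attach_map_eq, List.map_map, STm.tup.injEq]
      exact List.map_congr_left (fun a ha => STm.rename_subst ρ σ a)
termination_by t => sizeOf t
decreasing_by all_goals simp_wf <;> first | omega | (have := List.sizeOf_lt_of_mem ha; omega)

lemma STm.rename_eq_subst (ρ : Nat → Nat) :
    (t : STm) → t.rename ρ = t.subst (fun i => STm.var (ρ i))
  | .var i => by simp [STm.rename, STm.subst]
  | .lam n t => by
      simp only [STm.rename, STm.subst, STm.lam.injEq, true_and]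
      rw [STm.rename_eq_subst]
      congr 1
      funext i
      by_cases h : i < n <;> simp [h, STm.rename]
  | .app t u => by
      simp [STm.rename, STm.subst, STm.rename_eq_subst _ t, STm.rename_eq_subst _ u]
  | .proj j t => by simp [STm.rename, STm.subst, STm.rename_eq_subst _ t]
  | .tup ts => by
      simp only [STm.rename, STm.subst, attach_map_eq, STm.tup.injEq]
      exact List.map_congr_left (fun a ha => STm.rename_eq_subst ρ a)
termination_by t => sizeOf t
decreasing_by all_goals simp_wf <;> first | omega | (have := List.sizeOf_lt_of_mem ha; omega)

lemma STm.fvs_tup_subset {a : STm} {ts : List STm} (ha : a ∈ ts) :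
    a.fvs ⊆ (STm.tup ts).fvs := by
  have h : (STm.tup ts).fvs = (ts.map STm.fvs).foldr (· ∪ ·) ∅ := by
    rw [STm.fvs]
    rw [show (fun (x : {x // x ∈ ts}) (acc : Finset Nat) => x.1.fvs ∪ acc)
        = (fun x acc => (fun (s : Finset Nat) (acc : Finset Nat) => s ∪ acc) (x.1.fvs) acc) from rfl]
    rw [← List.foldr_map (f := fun (x : {x // x ∈ ts}) => x.1.fvs) (g := (· ∪ ·)) (l := ts.attach) (init := ∅),
        attach_map_eq]
  rw [h]
  clear h
  induction ts with
  | nil => cases ha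
  | cons b ts ih =>
      simp only [List.map_cons, List.foldr_cons]
      rcases List.mem_cons.1 ha with h | h
      · subst h; exact Finset.subset_union_left
      · exact (ih h).trans Finset.subset_union_right

lemma STm.subst_ext (σ σ' : Nat → STm) :
    (t : STm) → (∀ i ∈ t.fvs, σ i = σ' i) → t.subst σ = t.subst σ'
  | .var i, h => by simpa [STm.subst, STm.fvs] using h i
  | .lam n t, h => by
      simp only [STm.subst, STm.lam.injEq, true_and]
      refine STm.subst_ext _ _ t (fun i hi => ?_)
      by_cases hlt : i < n
      · simp [hlt]
      · simp only [hlt, if_false]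
        rw [h (i - n)]
        rw [STm.fvs]
        exact Finset.mem_image.2 ⟨i, Finset.mem_filter.2 ⟨hi, by omega⟩, rfl⟩
  | .app t u, h => by
      simp only [STm.fvs, Finset.mem_union] at h
      simp [STm.subst, STm.subst_ext σ σ' t (fun i hi => h i (Or.inl hi)),
        STm.subst_ext σ σ' u (fun i hi => h i (Or.inr hi))]
  | .proj j t, h => by
      simp only [STm.fvs] at h
      simp [STm.subst, STm.subst_ext σ σ' t h]
  | .tup ts, h => by
      simp only [STm.subst, attach_map_eq, STm.tup.injEq]
      exact List.map_congr_left (fun a ha =>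
        STm.subst_ext σ σ' a (fun i hi => h i (STm.fvs_tup_subset ha hi)))
termination_by t => sizeOf t
decreasing_by all_goals simp_wf <;> first | omega | (have := List.sizeOf_lt_of_mem ha; omega)

lemma STm.rename_id : (t : STm) → t.rename (fun i => i) = t
  | .var i => by simp [STm.rename]
  | .lam n t => by
      simp only [STm.rename, STm.lam.injEq, true_and]
      rw [show (fun i => if i < n then i else (fun i => i) (i - n) + n) = (fun i => i) by
        funext i; by_cases h : i < n <;> simp [h] <;> omega]
      exact STm.rename_id t
  | .app t u => by simp [STm.rename, STm.rename_id t, STm.rename_id u]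
  | .proj j t => by simp [STm.rename, STm.rename_id t]
  | .tup ts => by
      simp only [STm.rename, attach_map_eq, STm.tup.injEq]
      have : ts.map (fun a => a.rename (fun i => i)) = ts.map id :=
        List.map_congr_left (fun a ha => STm.rename_id a)
      simpa using this
termination_by t => sizeOf t
decreasing_by all_goals simp_wf <;> first | omega | (have := List.sizeOf_lt_of_mem ha; omega)

lemma ITm.irename_id : (t : ITm) → t.irename (fun i => i) = t
  | .var i => by simp [ITm.irename]
  | .app t u => by simp [ITm.irename, ITm.irename_id t, ITm.irename_id u]
  | .proj j t => by simp [ITm.irename, ITm.irename_id t]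
  | .tup ts => by
      simp only [ITm.irename, attach_map_eq, ITm.tup.injEq]
      have : ts.map (fun a => a.irename (fun i => i)) = ts.map id :=
        List.map_congr_left (fun a ha => ITm.irename_id a)
      simpa using this
  | .clo n m body bag => by
      simp only [ITm.irename, attach_map_eq, ITm.clo.injEq, true_and]
      have : bag.map (fun a => a.irename (fun i => i)) = bag.map id :=
        List.map_congr_left (fun a ha => ITm.irename_id a)
      simpa using this
termination_by t => sizeOf t
decreasing_by all_goals simp_wf <;> first | omega | (have := List.sizeOf_lt_of_mem ha; omega)

/-- Main lemma: unwrapping a renamed wrap gives the renamed source term. -/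
lemma STm.unwrap_irename_wrap : (t : STm) → (ρ : Nat → Nat) →
    (t.wrap.irename ρ).unwrap = t.rename ρ
  | .var i, ρ => by simp [STm.wrap, ITm.irename, ITm.unwrap, STm.rename]
  | .app t u, ρ => by
      simp [STm.wrap, ITm.irename, ITm.unwrap, STm.rename,
        STm.unwrap_irename_wrap t ρ, STm.unwrap_irename_wrap u ρ]
  | .proj j t, ρ => by
      simp [STm.wrap, ITm.irename, ITm.unwrap, STm.rename, STm.unwrap_irename_wrap t ρ]
  | .tup ts, ρ => by
      simp only [STm.wrap, ITm.irename, ITm.unwrap, STm.rename, attach_map_eq,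
        List.map_map, STm.tup.injEq]
      exact List.map_congr_left (fun a ha => STm.unwrap_irename_wrap a ρ)
  | .lam n t, ρ => by
      have hIH := STm.unwrap_irename_wrap t
      simp only [STm.wrap, ITm.irename, ITm.unwrap, STm.rename, attach_map_eq, List.map_map]
      set ys := Finset.sort
        (Finset.image (fun x => x - n) (Finset.filter (fun x => x ≥ n) t.fvs)) (fun x1 x2 => x1 ≤ x2) with hys
      rw [hIH, STm.rename_subst, STm.rename_eq_subst]
      congr 1
      apply STm.subst_ext
      intro i hi
      by_cases h1 : i < n
      · simp [h1]
      · have hmem : i - n ∈ ys := by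
          rw [hys, Finset.mem_sort]
          exact Finset.mem_image.2 ⟨i, Finset.mem_filter.2 ⟨hi, by omega⟩, rfl⟩
        have hk : ys.idxOf (i - n) < ys.length := List.idxOf_lt_length_iff.2 hmem
        have h2 : ¬ (n + ys.idxOf (i - n) < n) := by omega
        have h3 : n + ys.idxOf (i - n) < n + ys.length := by omega
        simp only [h1, if_false, h2, h3, if_true, Nat.add_sub_cancel_left]
        rw [List.getD_eq_getElem _ _ (by simpa using hk)]
        simp only [List.getElem_map, Function.comp_apply, List.getElem_idxOf hk]
        simp [ITm.irename, ITm.unwrap, STm.rename, Nat.sub_add_cancel (by omega : n ≤ i)]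
termination_by t => sizeOf t
decreasing_by all_goals simp_wf <;> first | omega | (have := List.sizeOf_lt_of_mem ha; omega)

end CC

namespace CC

/-- Unwrapping inverts wrapping: `⌊⌈u⌉⌋ = u` for every source term `u`. -/
theorem unwrap_wrap (u : STm) : u.wrap.unwrap = u := by
  have h := STm.unwrap_irename_wrap u (fun i => i)
  rwa [ITm.irename_id, STm.rename_id] at h

end CC
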